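/- arXiv:2112.04219 — 2 statements merged into one kernel-verified Lean document; each statement's English description precedes it below -/
import Mathlib

section
/- Under the hypotheses of the previous statement, the map from disturbance sequences to state trajectories is Lipschitz in the ℓ² norm: ‖x − x'‖_{ℓ²} ≤ (L/(1−λ))·‖d − d'‖_{ℓ²}, where x_0 = x'_0 and ‖x‖_{ℓ²}² = ∑_{t≥0}|x_t|². -/
/-! The error `e t = ‖x t - x' t‖` obeys `e (t + 1) ≤ λ e t + L u t` with `u t = ‖d t - d' t‖`.
Writing `λ e + L u = λ e + (1 - λ) (L u / (1 - λ))` and using convexity of the square gives the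
energy inequality `e (t + 1)² ≤ λ e t² + L² u t² / (1 - λ)`. Summing it, the partial sums `S`
of `e²` satisfy `S ≤ λ S + L² ‖u‖² / (1 - λ)`, hence `‖e‖² ≤ (L / (1 - λ))² ‖u‖²`. -/

open Finset

theorem norm_map_sub_map_le {X D : Type*} [SeminormedAddCommGroup X] [SeminormedAddCommGroup D]
    {F : X → D → X} {lam L : ℝ}
    (hcontr : ∀ x x' d, ‖F x d - F x' d‖ ≤ lam * ‖x - x'‖)
    (hlip : ∀ x d d', ‖F x d - F x d'‖ ≤ L * ‖d - d'‖) (x x' : X) (d d' : D) :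
    ‖F x d - F x' d'‖ ≤ lam * ‖x - x'‖ + L * ‖d - d'‖ :=
  calc ‖F x d - F x' d'‖ = ‖(F x d - F x' d) + (F x' d - F x' d')‖ := by
        rw [sub_add_sub_cancel]
    _ ≤ ‖F x d - F x' d‖ + ‖F x' d - F x' d'‖ := norm_add_le _ _
    _ ≤ lam * ‖x - x'‖ + L * ‖d - d'‖ := add_le_add (hcontr _ _ _) (hlip _ _ _)

theorem sq_mul_add_le {lam : ℝ} (hlam0 : 0 ≤ lam) (hlam1 : lam < 1) (a b : ℝ) :
    (lam * a + b) ^ 2 ≤ lam * a ^ 2 + b ^ 2 / (1 - lam) := by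
  have h1lam : 0 < 1 - lam := sub_pos.mpr hlam1
  have hgap : lam * a ^ 2 + b ^ 2 / (1 - lam) - (lam * a + b) ^ 2 =
      lam * ((1 - lam) * a - b) ^ 2 / (1 - lam) := by
    field_simp
    ring
  have : 0 ≤ lam * ((1 - lam) * a - b) ^ 2 / (1 - lam) := by positivity
  linarith

theorem summable_and_tsum_le_of_succ_le_mul_add {a b : ℕ → ℝ} {lam : ℝ}
    (hlam0 : 0 ≤ lam) (hlam1 : lam < 1) (ha : ∀ t, 0 ≤ a t) (hb : Summable b)
    (hb0 : ∀ t, 0 ≤ b t) (hrec : ∀ t, a (t + 1) ≤ lam * a t + b t) :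
    Summable a ∧ ∑' t, a t ≤ (a 0 + ∑' t, b t) / (1 - lam) := by
  have h1lam : 0 < 1 - lam := sub_pos.mpr hlam1
  have hpartial : ∀ n, ∑ t ∈ range n, a t ≤ (a 0 + ∑' t, b t) / (1 - lam) := by
    intro n
    rw [le_div_iff₀ h1lam]
    have hmono : ∑ t ∈ range n, a t ≤ ∑ t ∈ range (n + 1), a t :=
      sum_le_sum_of_subset_of_nonneg (range_subset_range.mpr n.le_succ) fun t _ _ => ha t
    have hstep : ∑ t ∈ range (n + 1), a t ≤
        a 0 + lam * ∑ t ∈ range (n + 1), a t + ∑' t, b t :=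
      calc ∑ t ∈ range (n + 1), a t = ∑ t ∈ range n, a (t + 1) + a 0 := sum_range_succ' _ _
        _ ≤ ∑ t ∈ range n, (lam * a t + b t) + a 0 := by gcongr with t; exact hrec t
        _ = lam * ∑ t ∈ range n, a t + ∑ t ∈ range n, b t + a 0 := by
            rw [sum_add_distrib, mul_sum]
        _ ≤ a 0 + lam * ∑ t ∈ range (n + 1), a t + ∑' t, b t := by
            have := hb.sum_le_tsum (range n) fun t _ => hb0 t
            nlinarith
    nlinarith
  have hsum : Summable a := summable_of_sum_range_le ha hpartial
  exact ⟨hsum, hsum.tsum_le_of_sum_range_le hpartial⟩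

/-- The disturbance-to-state map of a contracting system is Lipschitz in the
ℓ² norm with constant `L / (1 - λ)`. -/
theorem stmt_8
    {X D : Type*} [NormedAddCommGroup X] [NormedAddCommGroup D]
    (F : X → D → X) (lam L : ℝ)
    (hlam0 : 0 < lam) (hlam1 : lam < 1) (hL : 0 ≤ L)
    (hcontr : ∀ x x' d, ‖F x d - F x' d‖ ≤ lam * ‖x - x'‖)
    (hlip : ∀ x d d', ‖F x d - F x d'‖ ≤ L * ‖d - d'‖)
    (x x' : ℕ → X) (d d' : ℕ → D)
    (hx : ∀ t, x (t + 1) = F (x t) (d t))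
    (hx' : ∀ t, x' (t + 1) = F (x' t) (d' t))
    (h0 : x 0 = x' 0)
    (hd : Summable (fun t : ℕ => ‖d t - d' t‖ ^ 2)) :
    Summable (fun t : ℕ => ‖x t - x' t‖ ^ 2) ∧
    Real.sqrt (∑' t : ℕ, ‖x t - x' t‖ ^ 2) ≤
      (L / (1 - lam)) * Real.sqrt (∑' t : ℕ, ‖d t - d' t‖ ^ 2) := by
  have h1lam : 0 < 1 - lam := sub_pos.mpr hlam1
  have henergy : ∀ t, ‖x (t + 1) - x' (t + 1)‖ ^ 2 ≤
      lam * ‖x t - x' t‖ ^ 2 + L ^ 2 / (1 - lam) * ‖d t - d' t‖ ^ 2 := fun t =>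
    calc ‖x (t + 1) - x' (t + 1)‖ ^ 2 ≤ (lam * ‖x t - x' t‖ + L * ‖d t - d' t‖) ^ 2 := by
          rw [hx, hx']
          gcongr
          exact norm_map_sub_map_le hcontr hlip _ _ _ _
      _ ≤ lam * ‖x t - x' t‖ ^ 2 + L ^ 2 / (1 - lam) * ‖d t - d' t‖ ^ 2 := by
          convert sq_mul_add_le hlam0.le hlam1 _ (L * ‖d t - d' t‖) using 2
          ring
  obtain ⟨hsum, htsum⟩ := summable_and_tsum_le_of_succ_le_mul_add
    (a := fun t => ‖x t - x' t‖ ^ 2) hlam0.le hlam1 (fun t => sq_nonneg _)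
    (hd.mul_left (L ^ 2 / (1 - lam))) (fun t => by positivity) henergy
  refine ⟨hsum, ?_⟩
  rw [h0, sub_self, norm_zero, tsum_mul_left] at htsum
  calc Real.sqrt (∑' t, ‖x t - x' t‖ ^ 2)
      ≤ Real.sqrt ((L / (1 - lam)) ^ 2 * ∑' t, ‖d t - d' t‖ ^ 2) := by
        refine Real.sqrt_le_sqrt (htsum.trans_eq ?_)
        field_simp
        ring
    _ = L / (1 - lam) * Real.sqrt (∑' t, ‖d t - d' t‖ ^ 2) := by
        rw [Real.sqrt_mul (sq_nonneg _), Real.sqrt_sq (div_nonneg hL h1lam.le)]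
end

section
/- Let D₁₁ ∈ ℝ^{q×q} satisfy 2Λ − Λ D₁₁ − D₁₁ᵀ Λ ≻ 0 for some positive diagonal matrix Λ, and let σ : ℝ → ℝ be slope-restricted in [0,1]. Then for every b ∈ ℝ^q the equation w = σ(D₁₁ w + b) has at most one solution w. -/
/-!
For two solutions `w`, `w'` put `Δ = w - w'`; then `Δ = σ(D₁₁ w + b) - σ(D₁₁ w' + b)` while
the arguments of `σ` differ by `D₁₁ Δ`. Since `σ` is slope-restricted in `[0, 1]`, every coordinate
satisfies `Δᵢ ((D₁₁ Δ)ᵢ - Δᵢ) ≥ 0`; weighting by `λᵢ > 0` and summing shows that the quadratic form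
of `2Λ - Λ D₁₁ - D₁₁ᵀ Λ` is nonpositive at `Δ`, so positive definiteness forces `Δ = 0`.
-/

open Matrix

lemma sector_of_slope_mem_unitInterval (σ : ℝ → ℝ)
    (hσ : ∀ a b : ℝ, a ≠ b →
      0 ≤ (σ a - σ b) / (a - b) ∧ (σ a - σ b) / (a - b) ≤ 1)
    (a b : ℝ) : 0 ≤ (σ a - σ b) * ((a - b) - (σ a - σ b)) := by
  rcases eq_or_ne a b with rfl | hab
  · simp
  obtain ⟨hs₀, hs₁⟩ := hσ a b hab
  set s := (σ a - σ b) / (a - b)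
  have hσs : σ a - σ b = s * (a - b) := (div_mul_cancel₀ _ (sub_ne_zero.mpr hab)).symm
  calc 0 ≤ s * (1 - s) * (a - b) ^ 2 := by have := sub_nonneg.mpr hs₁; positivity
    _ = (σ a - σ b) * ((a - b) - (σ a - σ b)) := by rw [hσs]; ring

lemma Matrix.dotProduct_two_diagonal_sub_mulVec {n R : Type*} [Fintype n] [DecidableEq n] [CommRing R]
    (D : Matrix n n R) (l x : n → R) :
    x ⬝ᵥ (((2 : R) • diagonal l - diagonal l * D - Dᵀ * diagonal l) *ᵥ x)
      = 2 * ∑ i, l i * (x i * (x i - (D *ᵥ x) i)) := by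
  have hDt : x ⬝ᵥ ((Dᵀ * diagonal l) *ᵥ x) = (D *ᵥ x) ⬝ᵥ (diagonal l *ᵥ x) := by
    rw [← mulVec_mulVec, dotProduct_mulVec, vecMul_transpose]
  rw [sub_mulVec, sub_mulVec, dotProduct_sub, dotProduct_sub, hDt]
  simp only [smul_mulVec, dotProduct_smul, ← mulVec_mulVec]
  simp only [dotProduct, mulVec_diagonal, smul_eq_mul, Finset.mul_sum,
    ← Finset.sum_sub_distrib]
  refine Finset.sum_congr rfl fun i _ => ?_
  ring

/-- Uniqueness of equilibrium network solutions under the LMI condition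
`2Λ − Λ D₁₁ − D₁₁.transpose Λ ≻ 0`. -/
theorem stmt_13
    (q : ℕ) (D₁₁ : Matrix (Fin q) (Fin q) ℝ)
    (lamv : Fin q → ℝ) (hlam : ∀ i, 0 < lamv i)
    (hpos : ((2 : ℝ) • Matrix.diagonal lamv - Matrix.diagonal lamv * D₁₁ -
      D₁₁.transpose * Matrix.diagonal lamv).PosDef)
    (σ : ℝ → ℝ)
    (hσ : ∀ a b : ℝ, a ≠ b →
      0 ≤ (σ a - σ b) / (a - b) ∧ (σ a - σ b) / (a - b) ≤ 1) :
    ∀ (b : Fin q → ℝ) (w w' : Fin q → ℝ),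
      (∀ i, w i = σ (D₁₁.mulVec w i + b i)) →
      (∀ i, w' i = σ (D₁₁.mulVec w' i + b i)) →
      w = w' := by
  intro b w w' hw hw'
  by_contra hne
  set Δ := w - w'
  have hform_pos := hpos.dotProduct_mulVec_pos (show Δ ≠ 0 from sub_ne_zero.mpr hne)
  have hsector : ∀ i, lamv i * (Δ i * (Δ i - (D₁₁ *ᵥ Δ) i)) ≤ 0 := fun i => by
    have h := sector_of_slope_mem_unitInterval σ hσ ((D₁₁ *ᵥ w) i + b i) ((D₁₁ *ᵥ w') i + b i)
    rw [← hw i, ← hw' i] at h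
    simp only [Δ, mulVec_sub, Pi.sub_apply]
    exact mul_nonpos_of_nonneg_of_nonpos (hlam i).le (by linarith)
  rw [star_trivial, Matrix.dotProduct_two_diagonal_sub_mulVec] at hform_pos
  linarith [Finset.sum_nonpos fun i (_ : i ∈ Finset.univ) => hsector i]
end
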